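/- The leave-one-out weights of the unordered set estimator sum to one: for any size-k subset S^k of D, ∑_{s∈S^k} p(s) R(S^k,s) = 1, where R(S^k,s) = p^{D\{s}}(S^k\{s})/p(S^k). -/

import Mathlib

/-! Splitting each ordering of `S` at its first element `s` factors its sequential probability
as `p s / t` times the probability of drawing the rest from the remaining mass `t - p s`. Summing
over orderings, `p(S) = ∑ s ∈ S, p(s) p^{D \ {s}}(S \ {s})` when the total mass is `1`, and
dividing by `p(S)` gives the theorem. -/

open Finset MeasureTheory

variable {α : Type*}

/-- Probability of drawing the ordered sample `B` sequentially without replacement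
from (unnormalized) weights `p`, when `t` is the total remaining probability mass. -/
noncomputable def ordProb (p : α → ℝ) : ℝ → List α → ℝ
  | _, [] => 1
  | t, b :: L => (p b / t) * ordProb p (t - p b) L

/-- Probability of drawing the unordered sample `S` without replacement:
sum of `ordProb` over all orderings of `S`. -/
noncomputable def setProb (p : α → ℝ) (t : ℝ) (S : Finset α) : ℝ :=
  (S.toList.permutations.map (ordProb p t)).sum

section
variable [DecidableEq α]

theorem Finset.cons_perm_toList_iff {S : Finset α} {a : α} (ha : a ∈ S) {l : List α} :
    (a :: l).Perm S.toList ↔ l.Perm (S.erase a).toList := by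
  have hperm : S.toList.Perm (a :: (S.erase a).toList) := by
    simpa [insert_erase ha] using toList_insert (notMem_erase a S)
  rw [hperm.congr_right, List.perm_cons]

theorem Finset.toFinset_permutations_toList {S : Finset α} (hS : S.Nonempty) :
    S.toList.permutations.toFinset =
      (S.sigma fun a => (S.erase a).toList.permutations.toFinset).image fun x => x.1 :: x.2 := by
  ext m
  simp only [List.mem_toFinset, List.mem_permutations, mem_image, mem_sigma, Sigma.exists]
  constructor
  · intro hm
    obtain ⟨a, l, rfl⟩ : ∃ a l, m = a :: l := by
      cases m with
      | nil => exact absurd (toList_eq_nil.mp (List.Perm.nil_eq hm).symm) hS.ne_empty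
      | cons a l => exact ⟨a, l, rfl⟩
    have ha : a ∈ S := mem_toList.mp (hm.subset List.mem_cons_self)
    exact ⟨a, l, ⟨ha, (cons_perm_toList_iff ha).mp hm⟩, rfl⟩
  · rintro ⟨a, l, ⟨ha, hl⟩, rfl⟩
    exact (cons_perm_toList_iff ha).mpr hl

theorem setProb_eq_sum (p : α → ℝ) (t : ℝ) (S : Finset α) :
    setProb p t S = ∑ m ∈ S.toList.permutations.toFinset, ordProb p t m := by
  rw [setProb, List.sum_toFinset _ (List.nodup_permutations _ S.nodup_toList)]

theorem setProb_eq_sum_erase (p : α → ℝ) (t : ℝ) {S : Finset α} (hS : S.Nonempty) :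
    setProb p t S = ∑ s ∈ S, p s / t * setProb p (t - p s) (S.erase s) := by
  have hcons : Function.Injective fun x : Σ _ : α, List α => x.1 :: x.2 := by
    rintro ⟨a, l⟩ ⟨b, m⟩ h
    obtain ⟨rfl, rfl⟩ := List.cons.inj h
    rfl
  rw [setProb_eq_sum, toFinset_permutations_toList hS, sum_image hcons.injOn, sum_sigma]
  refine sum_congr rfl fun s _ => ?_
  rw [setProb_eq_sum, mul_sum]
  rfl

end

theorem leave_one_out_weights_sum_to_one_general [DecidableEq α] (S : Finset α)
    (k : ℕ) (hk1 : 1 ≤ k) (hcard : S.card = k)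
    (p : α → ℝ)
    (hpos : 0 < setProb p 1 S) :
    ∑ s ∈ S, p s * (setProb p (1 - p s) (S.erase s) / setProb p 1 S) = 1 := by
  have hS : S.Nonempty := card_pos.mp (by omega)
  calc ∑ s ∈ S, p s * (setProb p (1 - p s) (S.erase s) / setProb p 1 S)
      = (∑ s ∈ S, p s / 1 * setProb p (1 - p s) (S.erase s)) / setProb p 1 S := by
        simp only [div_one, sum_div, mul_div_assoc]
    _ = 1 := by rw [← setProb_eq_sum_erase p 1 hS, div_self hpos.ne']

theorem leave_one_out_weights_sum_to_one [DecidableEq α] (D S : Finset α) (hS : S ⊆ D)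
    (k : ℕ) (hk1 : 1 ≤ k) (hcard : S.card = k) (hk : k ≤ D.card)
    (p : α → ℝ) (hp : ∀ x ∈ D, 0 < p x) (hsum : ∑ x ∈ D, p x = 1)
    (hpos : 0 < setProb p 1 S) :
    ∑ s ∈ S, p s * (setProb p (1 - p s) (S.erase s) / setProb p 1 S) = 1 :=
  leave_one_out_weights_sum_to_one_general S k hk1 hcard p hpos
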